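/- arXiv:1911.01837 — 7 statements merged into one kernel-verified Lean document; each statement's English description precedes it below -/
import Mathlib

section
/- Let f ∈ ℤ[X] and let d ∈ {1, 2, −2}. For every even natural number n, the integer (−d)^{n/2} divides the polynomials N_n(f^2 + d, f) and D_n(f^2 + d, f) in ℤ[X] (i.e., it divides every coefficient), and the quotient polynomials P = N_n(f^2 + d, f)/(−d)^{n/2} and Q = D_n(f^2 + d, f)/(−d)^{n/2} are integer polynomials satisfying P^2 − (f^2 + d)·Q^2 = 1. -/
/-- The Rédei polynomial `N_n(α, z) = ∑_{k=0}^{⌊n/2⌋} C(n, 2k) α^k z^(n-2k)`. -/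
def redeiN {R : Type*} [CommRing R] (n : ℕ) (α z : R) : R :=
  ∑ k ∈ Finset.range (n / 2 + 1), (n.choose (2 * k) : R) * α ^ k * z ^ (n - 2 * k)

/-- The Rédei polynomial `D_n(α, z) = ∑_{k=0}^{⌊n/2⌋} C(n, 2k+1) α^k z^(n-2k-1)`. -/
def redeiD {R : Type*} [CommRing R] (n : ℕ) (α z : R) : R :=
  ∑ k ∈ Finset.range (n / 2 + 1), (n.choose (2 * k + 1) : R) * α ^ k * z ^ (n - 2 * k - 1)

section Aux

variable {R : Type*} [CommRing R]

/-- The defining sum for `redeiN` can be extended to any range of length `≥ n/2 + 1`,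
since the extra binomial coefficients vanish. -/
lemma redeiN_ext (n N : ℕ) (h : n / 2 + 1 ≤ N) (α z : R) :
    redeiN n α z = ∑ k ∈ Finset.range N, (n.choose (2 * k) : R) * α ^ k * z ^ (n - 2 * k) := by
  rw [redeiN]
  apply Finset.sum_subset (Finset.range_subset_range.mpr h)
  intro k _ hk
  have : n < 2 * k := by simp only [Finset.mem_range, not_lt] at hk; omega
  simp [Nat.choose_eq_zero_of_lt this]

/-- The defining sum for `redeiD` can be extended to any range of length `≥ n/2 + 1`. -/
lemma redeiD_ext (n N : ℕ) (h : n / 2 + 1 ≤ N) (α z : R) :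
    redeiD n α z = ∑ k ∈ Finset.range N, (n.choose (2 * k + 1) : R) * α ^ k * z ^ (n - 2 * k - 1) := by
  rw [redeiD]
  apply Finset.sum_subset (Finset.range_subset_range.mpr h)
  intro k _ hk
  have : n < 2 * k + 1 := by simp only [Finset.mem_range, not_lt] at hk; omega
  simp [Nat.choose_eq_zero_of_lt this]

/-- Recurrence `D_{n+1} = N_n + z D_n`. -/
lemma redeiD_succ (n : ℕ) (α z : R) :
    redeiD (n + 1) α z = redeiN n α z + z * redeiD n α z := by
  rw [redeiD_ext (n+1) (n+2) (by omega), redeiN_ext n (n+2) (by omega),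
    redeiD_ext n (n+2) (by omega), Finset.mul_sum, ← Finset.sum_add_distrib]
  refine Finset.sum_congr rfl fun k _ => ?_
  rcases lt_trichotomy (2 * k) n with h | h | h
  · have e0 : n - 2 * k = (n - 2 * k - 1) + 1 := by omega
    have e1 : n + 1 - 2 * k - 1 = (n - 2 * k - 1) + 1 := by omega
    rw [e1, Nat.choose_succ_succ n (2*k), e0, pow_succ]
    push_cast
    ring
  · have e1 : n + 1 - 2 * k - 1 = 0 := by omega
    have e2 : n - 2 * k = 0 := by omega
    have e3 : n.choose (2 * k + 1) = 0 := Nat.choose_eq_zero_of_lt (by omega)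
    rw [Nat.choose_succ_succ n (2*k), e3, e1, e2]
    push_cast
    ring
  · have e3 : n.choose (2 * k + 1) = 0 := Nat.choose_eq_zero_of_lt (by omega)
    have e4 : n.choose (2 * k) = 0 := Nat.choose_eq_zero_of_lt (by omega)
    have e5 : (n+1).choose (2 * k + 1) = 0 := Nat.choose_eq_zero_of_lt (by omega)
    rw [e3, e4, e5]
    push_cast
    ring

/-- Recurrence `N_{n+1} = z N_n + α D_n`. -/
lemma redeiN_succ (n : ℕ) (α z : R) :
    redeiN (n + 1) α z = z * redeiN n α z + α * redeiD n α z := by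
  rw [redeiN_ext (n+1) (n+1+1) (by omega), redeiN_ext n (n+1+1) (by omega),
    redeiD_ext n (n+1) (by omega), Finset.mul_sum, Finset.mul_sum,
    Finset.sum_range_succ' (fun k => (((n+1).choose (2*k) : R)) * α ^ k * z ^ (n + 1 - 2 * k)) (n+1),
    Finset.sum_range_succ' (fun k => z * (((n).choose (2*k) : R) * α ^ k * z ^ (n - 2 * k))) (n+1)]
  have key : ∑ k ∈ Finset.range (n+1),
      (((n+1).choose (2*(k+1)) : R)) * α ^ (k+1) * z ^ (n + 1 - 2 * (k+1))
      = ∑ k ∈ Finset.range (n+1),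
        (z * (((n).choose (2*(k+1)) : R) * α ^ (k+1) * z ^ (n - 2 * (k+1)))
          + α * (((n).choose (2*k+1) : R) * α ^ k * z ^ (n - 2 * k - 1))) := by
    refine Finset.sum_congr rfl fun k _ => ?_
    have h2 : 2 * (k+1) = 2 * k + 1 + 1 := by ring
    rcases lt_trichotomy (2 * k + 2) (n + 1) with h | h | h
    · have e1 : n + 1 - 2 * (k+1) = (n - 2 * (k+1)) + 1 := by omega
      have e2 : n - 2 * k - 1 = (n - 2 * (k+1)) + 1 := by omega
      rw [e1, e2, h2, Nat.choose_succ_succ, pow_succ]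
      push_cast
      ring
    · have hn : 2 * (k + 1) = n + 1 := by omega
      have hk : 2 * k + 1 = n := by omega
      have e1 : n + 1 - 2 * (k+1) = 0 := by omega
      have e2 : n - 2 * k - 1 = 0 := by omega
      have e3 : n.choose (2 * (k+1)) = 0 := Nat.choose_eq_zero_of_lt (by omega)
      rw [e1, e2, e3, hn, Nat.choose_self, hk, Nat.choose_self]
      push_cast
      ring
    · have e3 : n.choose (2 * (k+1)) = 0 := Nat.choose_eq_zero_of_lt (by omega)
      have e4 : n.choose (2 * k + 1) = 0 := Nat.choose_eq_zero_of_lt (by omega)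
      have e5 : (n+1).choose (2 * (k+1)) = 0 := Nat.choose_eq_zero_of_lt (by omega)
      rw [e3, e4, e5]
      push_cast
      ring
  rw [key, Finset.sum_add_distrib]
  simp [pow_succ]
  ring

end Aux

open Polynomial in
/-- The pair of quotient polynomials `(P_m, Q_m)` with
`(-d)^m P_m = N_{2m}(f² + d, f)` and `(-d)^m Q_m = D_{2m}(f² + d, f)`,
defined by recursion, where `e` satisfies `e * d = -2`. -/
noncomputable def redeiPQ (e : ℤ) (f α : Polynomial ℤ) : ℕ → Polynomial ℤ × Polynomial ℤ
  | 0 => (1, 0)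
  | m + 1 =>
      ((C e * f ^ 2 - 1) * (redeiPQ e f α m).1 + C e * f * α * (redeiPQ e f α m).2,
       C e * f * (redeiPQ e f α m).1 + (C e * f ^ 2 - 1) * (redeiPQ e f α m).2)

open Polynomial in
lemma redeiPQ_pell (e d : ℤ) (f : Polynomial ℤ) (hE : (C e : Polynomial ℤ) * C d = -2) (m : ℕ) :
    (redeiPQ e f (f ^ 2 + C d) m).1 ^ 2
      - (f ^ 2 + C d) * (redeiPQ e f (f ^ 2 + C d) m).2 ^ 2 = 1 := by
  induction m with
  | zero => simp [redeiPQ]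
  | succ m ih =>
      rw [redeiPQ]
      set P := (redeiPQ e f (f ^ 2 + C d) m).1
      set Q := (redeiPQ e f (f ^ 2 + C d) m).2
      simp only
      linear_combination ((C e * f ^ 2 - 1) ^ 2 - (C e) ^ 2 * f ^ 2 * (f ^ 2 + C d)) * ih
        - C e * f ^ 2 * hE

open Polynomial in
lemma redeiPQ_eq (e d : ℤ) (f : Polynomial ℤ) (hE : (C e : Polynomial ℤ) * C d = -2) (m : ℕ) :
    C ((-d) ^ m) * (redeiPQ e f (f ^ 2 + C d) m).1 = redeiN (2 * m) (f ^ 2 + C d) f ∧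
    C ((-d) ^ m) * (redeiPQ e f (f ^ 2 + C d) m).2 = redeiD (2 * m) (f ^ 2 + C d) f := by
  induction m with
  | zero => constructor <;> simp [redeiPQ, redeiN, redeiD]
  | succ m ih =>
      obtain ⟨hN, hD⟩ := ih
      have h21 : 2 * (m + 1) = (2 * m + 1) + 1 := by ring
      have hNrec : redeiN (2 * (m+1)) (f ^ 2 + C d) f
          = (2 * f ^ 2 + C d) * redeiN (2 * m) (f ^ 2 + C d) f
            + 2 * f * (f ^ 2 + C d) * redeiD (2 * m) (f ^ 2 + C d) f := by
        rw [h21, redeiN_succ, redeiN_succ, redeiD_succ]; ring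
      have hDrec : redeiD (2 * (m+1)) (f ^ 2 + C d) f
          = 2 * f * redeiN (2 * m) (f ^ 2 + C d) f
            + (2 * f ^ 2 + C d) * redeiD (2 * m) (f ^ 2 + C d) f := by
        rw [h21, redeiD_succ, redeiN_succ, redeiD_succ]; ring
      have hc : (C ((-d) ^ (m+1)) : Polynomial ℤ) = C (-d) * C ((-d) ^ m) := by
        rw [← C_mul]; ring_nf
      have hcd : (C (-d) : Polynomial ℤ) = - C d := by simp
      rw [redeiPQ]
      set P := (redeiPQ e f (f ^ 2 + C d) m).1
      set Q := (redeiPQ e f (f ^ 2 + C d) m).2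
      constructor
      · simp only
        rw [hNrec, hc, hcd]
        linear_combination (2 * f ^ 2 + C d) * hN + 2 * f * (f ^ 2 + C d) * hD
          - C ((-d) ^ m) * (f ^ 2 * P + f * (f ^ 2 + C d) * Q) * hE
      · simp only
        rw [hDrec, hc, hcd]
        linear_combination 2 * f * hN + (2 * f ^ 2 + C d) * hD
          - C ((-d) ^ m) * (f * P + f ^ 2 * Q) * hE

open Polynomial in
/-- For `d ∈ {1, 2, −2}` and even `n`, the integer `(−d)^{n/2}` divides the Rédei polynomials
`N_n(f² + d, f)` and `D_n(f² + d, f)` in `ℤ[X]`, and the quotients `P`, `Q` are integer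
polynomials satisfying the Pell equation `P² − (f² + d)·Q² = 1`. -/
theorem redei_pell_integer_solutions (f : Polynomial ℤ) (d : ℤ)
    (hd : d ∈ ({1, 2, -2} : Set ℤ)) (n : ℕ) (hn : Even n) :
    ∃ P Q : Polynomial ℤ,
      C ((-d) ^ (n / 2)) * P = redeiN n (f ^ 2 + C d) f ∧
      C ((-d) ^ (n / 2)) * Q = redeiD n (f ^ 2 + C d) f ∧
      P ^ 2 - (f ^ 2 + C d) * Q ^ 2 = 1 := by
  obtain ⟨m, rfl⟩ : ∃ m, n = 2 * m := by
    obtain ⟨r, hr⟩ := hn; exact ⟨r, by omega⟩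
  have hm : 2 * m / 2 = m := by omega
  obtain ⟨e, he⟩ : ∃ e : ℤ, e * d = -2 := by
    simp only [Set.mem_insert_iff, Set.mem_singleton_iff] at hd
    rcases hd with rfl | rfl | rfl
    · exact ⟨-2, by norm_num⟩
    · exact ⟨-1, by norm_num⟩
    · exact ⟨1, by norm_num⟩
  have hE : (C e : Polynomial ℤ) * C d = -2 := by
    rw [← C_mul, he]; simp
  obtain ⟨hN, hD⟩ := redeiPQ_eq e d f hE m
  exact ⟨(redeiPQ e f (f ^ 2 + C d) m).1, (redeiPQ e f (f ^ 2 + C d) m).2,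
    by rw [hm]; exact hN, by rw [hm]; exact hD, redeiPQ_pell e d f hE m⟩
end

section
/- Let d ∈ ℤ be nonzero, let f ∈ ℤ[X] have degree m ≥ 1 with positive leading coefficient, let n ≥ 1, and let P, Q ∈ ℚ[X] with deg P = n·m, deg Q = (n−1)·m, both with positive leading coefficients, satisfying P^2 − (f^2 + d)·Q^2 = (−d)^n. Define P' = −(f/d)·P + ((f^2 + d)/d)·Q and Q' = (1/d)·P − (f/d)·Q in ℚ[X]. Then deg P' < deg P and deg Q' < deg Q. -/
/-!
Write `R = P - F Q`. The Pell equation factors as `R · (P + F Q) = (-d)ⁿ + d Q²`, and since all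
leading coefficients are positive, `P + F Q` has the full degree `n m`. Hence
`deg R + n m ≤ 2 (n - 1) m`, i.e. `deg R + m ≤ (n - 1) m`. Finally `Q' = R / d` and
`P' = Q - (F / d) R`, both of which are then visibly of smaller degree.
-/

open Polynomial

lemma WithBot.lt_of_add_le_of_pos {a b c : WithBot ℕ} (h : a + b ≤ c) (hb : 0 < b)
    (hc : c ≠ ⊥) : a < c := by
  lift c to ℕ using hc
  lift b to ℕ using ne_bot_of_gt hb
  cases a with
  | bot => exact WithBot.bot_lt_coe c
  | coe k =>
    have h' : k + b ≤ c := by exact_mod_cast h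
    have hb' : 0 < b := WithBot.coe_pos.mp hb
    exact WithBot.coe_lt_coe.mpr (by omega)

section OrderedRing

variable {S : Type*} [CommRing S] [LinearOrder S] [IsStrictOrderedRing S]

lemma degree_add_mul_eq_of_leadingCoeff_pos {P F Q : S[X]}
    (hdeg : P.degree = F.degree + Q.degree) (hP : 0 < P.leadingCoeff)
    (hF : 0 < F.leadingCoeff) (hQ : 0 < Q.leadingCoeff) :
    (P + F * Q).degree = P.degree := by
  have hlc : P.leadingCoeff + (F * Q).leadingCoeff ≠ 0 := by
    rw [leadingCoeff_mul]
    positivity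
  rw [degree_add_eq_of_leadingCoeff_add_ne_zero hlc, degree_mul, ← hdeg, max_self]

lemma degree_sub_mul_add_degree_le {P F Q : S[X]} {c e : S}
    (hPell : P ^ 2 - (F ^ 2 + C e) * Q ^ 2 = C c) (hdeg : P.degree = F.degree + Q.degree)
    (hP : 0 < P.leadingCoeff) (hF : 0 < F.leadingCoeff) (hQ : 0 < Q.leadingCoeff) :
    (P - F * Q).degree + F.degree ≤ Q.degree := by
  have hQne : Q ≠ 0 := leadingCoeff_ne_zero.mp hQ.ne'
  have hQ0 : 0 ≤ Q.degree := zero_le_degree_iff.mpr hQne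
  have hfactor : (P - F * Q) * (P + F * Q) = C c + C e * Q ^ 2 := by
    linear_combination hPell
  have hrhs : (C c + C e * Q ^ 2).degree ≤ Q.degree + Q.degree := by
    refine (degree_add_le _ _).trans (max_le (degree_C_le.trans (add_nonneg hQ0 hQ0)) ?_)
    calc (C e * Q ^ 2).degree ≤ 0 + 2 • Q.degree :=
          (degree_mul_le _ _).trans (add_le_add degree_C_le (degree_pow_le _ _))
      _ = Q.degree + Q.degree := by rw [zero_add, two_nsmul]
  rwa [← WithBot.add_le_add_iff_right (degree_ne_bot.mpr hQne), add_assoc, ← hdeg,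
    ← degree_add_mul_eq_of_leadingCoeff_pos hdeg hP hF hQ, ← degree_mul, hfactor]

end OrderedRing

lemma degree_sub_C_mul_mul_lt {S : Type*} [Ring S] {P Q F R : S[X]} (a : S)
    (hR : R.degree + F.degree ≤ Q.degree) (hQP : Q.degree < P.degree) :
    (Q - C a * F * R).degree < P.degree := by
  refine (degree_sub_le _ _).trans_lt (max_lt hQP (lt_of_le_of_lt ?_ hQP))
  calc (C a * F * R).degree ≤ F.degree + R.degree := by
        rw [mul_assoc, ← smul_eq_C_mul]
        exact (degree_smul_le _ _).trans (degree_mul_le _ _)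
    _ ≤ Q.degree := by rwa [add_comm]

/-- Descent step, part 2 (Lemma 2, item 2): under the degree and positivity hypotheses, the
polynomials `P' = −(f/d)·P + ((f² + d)/d)·Q` and `Q' = (1/d)·P − (f/d)·Q` have strictly smaller
degrees than `P` and `Q`, respectively. -/
theorem pell_descent_deg (d : ℤ) (hd : d ≠ 0) (f : Polynomial ℤ) (m : ℕ)
    (hm : f.natDegree = m) (hm0 : 1 ≤ m) (hf : 0 < f.leadingCoeff)
    (n : ℕ) (hn : 1 ≤ n) (F P Q P' Q' : Polynomial ℚ)
    (hF : F = f.map (Int.castRingHom ℚ))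
    (hdegP : P.degree = (n * m : ℕ)) (hdegQ : Q.degree = ((n - 1) * m : ℕ))
    (hlcP : 0 < P.leadingCoeff) (hlcQ : 0 < Q.leadingCoeff)
    (hPell : P ^ 2 - (F ^ 2 + C (d : ℚ)) * Q ^ 2 = C ((-(d : ℚ)) ^ n))
    (hP' : P' = -(C ((d : ℚ)⁻¹) * F * P) + C ((d : ℚ)⁻¹) * (F ^ 2 + C (d : ℚ)) * Q)
    (hQ' : Q' = C ((d : ℚ)⁻¹) * P - C ((d : ℚ)⁻¹) * F * Q) :
    P'.degree < P.degree ∧ Q'.degree < Q.degree := by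
  have hFdeg : F.degree = m := by
    rw [hF, degree_map_eq_of_injective Int.cast_injective,
      degree_eq_natDegree (leadingCoeff_ne_zero.mp hf.ne'), hm]
  have hFlc : 0 < F.leadingCoeff := by
    rw [hF, leadingCoeff_map_of_injective Int.cast_injective, eq_intCast]
    exact_mod_cast hf
  have hFpos : (0 : WithBot ℕ) < F.degree := by rw [hFdeg]; exact_mod_cast hm0
  have hdeg : P.degree = F.degree + Q.degree := by
    rw [hdegP, hdegQ, hFdeg]
    norm_cast
    obtain ⟨k, rfl⟩ := Nat.exists_eq_add_of_le' hn
    simp only [Nat.add_sub_cancel]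
    ring
  set R := P - F * Q
  have hR : R.degree + F.degree ≤ Q.degree :=
    degree_sub_mul_add_degree_le hPell hdeg hlcP hFlc hlcQ
  have hRQ : R.degree < Q.degree :=
    WithBot.lt_of_add_le_of_pos hR hFpos (hdegQ ▸ WithBot.coe_ne_bot)
  have hQP : Q.degree < P.degree :=
    WithBot.lt_of_add_le_of_pos (by rw [hdeg, add_comm]) hFpos (hdegP ▸ WithBot.coe_ne_bot)
  have hCd : C (d : ℚ)⁻¹ * C (d : ℚ) = 1 := by
    rw [← C_mul, inv_mul_cancel₀ (Int.cast_ne_zero.mpr hd), C_1]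
  have hP'R : P' = Q - C (d : ℚ)⁻¹ * F * R := by
    rw [hP']
    linear_combination Q * hCd
  have hQ'R : Q' = C (d : ℚ)⁻¹ * R := by
    rw [hQ']
    ring
  refine ⟨hP'R ▸ degree_sub_C_mul_mul_lt _ hR hQP, ?_⟩
  rw [hQ'R, ← smul_eq_C_mul]
  exact (degree_smul_le _ _).trans_lt hRQ
end

section
/- Let d ∈ ℤ be nonzero, let f ∈ ℤ[X] be nonconstant of degree m, and let P, Q ∈ ℤ[X] with Q ≠ 0 satisfy P^2 − (f^2 + d)·Q^2 = 1. Then there exists a natural number n ≥ 1 such that deg P = n·m and deg Q = (n−1)·m. -/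
open Polynomial

private lemma pell_deg_aux (d : ℤ) (f : Polynomial ℤ) (m : ℕ)
    (hm : f.natDegree = m) (hm0 : 0 < m)
    (c : ℤ) (A B : Polynomial ℤ) (hB : B ≠ 0)
    (heq : A ^ 2 - (f ^ 2 + C d) * B ^ 2 = C c) :
    A.natDegree = m + B.natDegree ∧
      A.leadingCoeff ^ 2 = (f.leadingCoeff * B.leadingCoeff) ^ 2 := by
  have hf : f ≠ 0 := fun h => by simp [h] at hm; omega
  have hDdeg : (f ^ 2 + C d).natDegree = 2 * m := by
    rw [natDegree_add_C, natDegree_pow, hm]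
  have hDne : (f ^ 2 + C d) ≠ 0 := fun h => by
    rw [h, natDegree_zero] at hDdeg; omega
  have hDlc : (f ^ 2 + C d).leadingCoeff = f.leadingCoeff ^ 2 := by
    have h1 : (f ^ 2).natDegree = 2 * m := by rw [natDegree_pow, hm]
    rw [leadingCoeff, hDdeg, coeff_add, coeff_C, if_neg (by omega), ← h1,
      coeff_natDegree, leadingCoeff_pow, add_zero]
  have hA2 : A ^ 2 = C c + (f ^ 2 + C d) * B ^ 2 := by linear_combination heq
  have hDB : ((f ^ 2 + C d) * B ^ 2).natDegree = 2 * m + 2 * B.natDegree := by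
    rw [natDegree_mul hDne (pow_ne_zero 2 hB), hDdeg, natDegree_pow]
  have hRHS : (C c + (f ^ 2 + C d) * B ^ 2).natDegree = 2 * m + 2 * B.natDegree := by
    rw [add_comm, natDegree_add_C, hDB]
  have hA2deg : (A ^ 2).natDegree = 2 * m + 2 * B.natDegree := by rw [hA2, hRHS]
  have hAdeg : A.natDegree = m + B.natDegree := by
    rw [natDegree_pow] at hA2deg; omega
  refine ⟨hAdeg, ?_⟩
  rw [← leadingCoeff_pow, leadingCoeff, hA2deg, hA2, coeff_add, coeff_C,
    if_neg (by omega), ← hDB, coeff_natDegree, leadingCoeff_mul, hDlc,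
    leadingCoeff_pow, zero_add]
  ring

private lemma pell_dvd_aux (d : ℤ) (hd : d ≠ 0) (f : Polynomial ℤ) (m : ℕ)
    (hm : f.natDegree = m) (hm0 : 0 < m) :
    ∀ b : ℕ, ∀ (c : ℤ) (A B : Polynomial ℤ), B ≠ 0 → B.natDegree = b →
      A ^ 2 - (f ^ 2 + C d) * B ^ 2 = C c → m ∣ b := by
  have hf : f ≠ 0 := fun h => by simp [h] at hm; omega
  intro b
  induction b using Nat.strong_induction_on with
  | _ b IH =>
    intro c A B hB hbB heq
    rcases Nat.eq_zero_or_pos b with rfl | hb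
    · exact dvd_zero m
    obtain ⟨hAdeg, hAlc⟩ := pell_deg_aux d f m hm hm0 c A B hB heq
    have hlcf : f.leadingCoeff ≠ 0 := leadingCoeff_ne_zero.mpr hf
    have hlcB : B.leadingCoeff ≠ 0 := leadingCoeff_ne_zero.mpr hB
    have hAne : A ≠ 0 := by
      intro h
      rw [h, leadingCoeff_zero] at hAlc
      exact (pow_ne_zero 2 (mul_ne_zero hlcf hlcB)) hAlc.symm
    -- sign normalization
    obtain ⟨ε, hε, hεlc⟩ : ∃ ε : ℤ, ε ^ 2 = 1 ∧
        (C ε * A).leadingCoeff = f.leadingCoeff * B.leadingCoeff := by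
      have h0 : (A.leadingCoeff - f.leadingCoeff * B.leadingCoeff) *
          (A.leadingCoeff + f.leadingCoeff * B.leadingCoeff) = 0 := by
        linear_combination hAlc
      rcases mul_eq_zero.mp h0 with h | h
      · exact ⟨1, by norm_num, by rw [C_1, one_mul]; linarith⟩
      · refine ⟨-1, by norm_num, ?_⟩
        rw [show (C (-1 : ℤ)) = -1 by simp, neg_one_mul, leadingCoeff_neg]
        linarith
    set A₂ := C ε * A with hA₂def
    have hεne : ε ≠ 0 := fun h => by simp [h] at hε
    have hA₂sq : A₂ ^ 2 = A ^ 2 := by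
      rw [hA₂def, mul_pow, ← C_pow, hε, C_1, one_mul]
    have hA₂eq : A₂ ^ 2 - (f ^ 2 + C d) * B ^ 2 = C c := by rw [hA₂sq]; exact heq
    have hA₂ne : A₂ ≠ 0 := mul_ne_zero (fun h => hεne (by simpa using h)) hAne
    have hA₂deg : A₂.natDegree = m + b := by
      rw [hA₂def, natDegree_C_mul hεne, hAdeg, hbB]
    have hfB : (f * B).natDegree = m + b := by
      rw [natDegree_mul hf hB, hm, hbB]
    have hfBlc : (f * B).leadingCoeff = f.leadingCoeff * B.leadingCoeff :=
      leadingCoeff_mul f B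
    -- the sum A₂ + f*B has exact degree m + b
    have hScoeff : (A₂ + f * B).coeff (m + b) =
        2 * (f.leadingCoeff * B.leadingCoeff) := by
      have c1 : A₂.coeff (m + b) = A₂.leadingCoeff := by rw [leadingCoeff, hA₂deg]
      have c2 : (f * B).coeff (m + b) = (f * B).leadingCoeff := by rw [leadingCoeff, hfB]
      rw [coeff_add, c1, c2, hεlc, hfBlc]; ring
    have h2lc : (2 : ℤ) * (f.leadingCoeff * B.leadingCoeff) ≠ 0 :=
      mul_ne_zero two_ne_zero (mul_ne_zero hlcf hlcB)
    have hSne : A₂ + f * B ≠ 0 := fun h => h2lc (by rw [h] at hScoeff; simpa using hScoeff.symm)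
    have hSdeg : (A₂ + f * B).natDegree = m + b := by
      refine le_antisymm ?_ (le_natDegree_of_ne_zero (hScoeff ▸ h2lc))
      refine (natDegree_add_le _ _).trans ?_
      rw [hA₂deg, hfB, max_self]
    -- key identity
    have hkey : (A₂ - f * B) * (A₂ + f * B) = C c + C d * B ^ 2 := by
      linear_combination hA₂eq
    have hRcoeff : (C c + C d * B ^ 2).coeff (2 * b) = d * B.leadingCoeff ^ 2 := by
      rw [coeff_add, coeff_C, if_neg (by omega), coeff_C_mul, zero_add]
      have : (B ^ 2).coeff (2 * b) = (B ^ 2).leadingCoeff := by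
        rw [leadingCoeff, natDegree_pow, hbB]
      rw [this, leadingCoeff_pow]
    have hRne : C c + C d * B ^ 2 ≠ 0 := fun h => by
      rw [h, coeff_zero] at hRcoeff
      exact (mul_ne_zero hd (pow_ne_zero 2 hlcB)) hRcoeff.symm
    have hRdeg : (C c + C d * B ^ 2).natDegree = 2 * b := by
      rw [add_comm, natDegree_add_C, natDegree_C_mul hd, natDegree_pow, hbB]
    have hB'ne : A₂ - f * B ≠ 0 := by
      intro h
      rw [h, zero_mul] at hkey
      exact hRne hkey.symm
    have hB'deg : (A₂ - f * B).natDegree + (m + b) = 2 * b := by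
      have := natDegree_mul hB'ne hSne
      rw [hkey, hRdeg, hSdeg] at this
      omega
    have hmb : m ≤ b := by omega
    -- new solution
    have hnew : (f * A₂ - (f ^ 2 + C d) * B) ^ 2 -
        (f ^ 2 + C d) * (A₂ - f * B) ^ 2 = C (-(d * c)) := by
      have hCC : (C (-(d * c)) : Polynomial ℤ) = -(C d * C c) := by
        rw [← C_mul, map_neg]
      rw [hCC]
      linear_combination (-(C d) : Polynomial ℤ) * hA₂eq
    have hdvd : m ∣ (b - m) := by
      refine IH (b - m) (by omega) (-(d * c)) (f * A₂ - (f ^ 2 + C d) * B)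
        (A₂ - f * B) hB'ne (by omega) hnew
    obtain ⟨j, hj⟩ := hdvd
    exact ⟨j + 1, by rw [Nat.mul_succ]; omega⟩

/-- If `P, Q ∈ ℤ[X]` with `Q ≠ 0` solve the Pell equation `P² − (f² + d)·Q² = 1` for a
nonconstant `f` of degree `m` and nonzero `d`, then `deg P = n·m` and `deg Q = (n−1)·m`
for some `n ≥ 1`. -/
theorem pell_solution_degrees (d : ℤ) (hd : d ≠ 0) (f : Polynomial ℤ) (m : ℕ)
    (hm : f.natDegree = m) (hm0 : 0 < m) (P Q : Polynomial ℤ) (hQ : Q ≠ 0)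
    (hPell : P ^ 2 - (f ^ 2 + C d) * Q ^ 2 = 1) :
    ∃ n : ℕ, 1 ≤ n ∧ P.natDegree = n * m ∧ Q.natDegree = (n - 1) * m := by
  have hPell' : P ^ 2 - (f ^ 2 + C d) * Q ^ 2 = C 1 := by rw [C_1]; exact hPell
  obtain ⟨hPdeg, -⟩ := pell_deg_aux d f m hm hm0 1 P Q hQ hPell'
  obtain ⟨j, hj⟩ := pell_dvd_aux d hd f m hm hm0 Q.natDegree 1 P Q hQ rfl hPell'
  refine ⟨j + 1, by omega, ?_, ?_⟩
  · rw [hPdeg, hj]; ring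
  · rw [show j + 1 - 1 = j from rfl, hj, Nat.mul_comm]
end

section
/- Fix m ≥ 2, a commutative ring R and z, α ∈ R. Let M be the m×m matrix with z on the diagonal, 1 on the subdiagonal, α in the top-right corner, and 0 elsewhere. Then for every natural number n, M^n equals the m×m matrix whose (i,j) entry is A_n^{(i−j)}(z,α) when i ≥ j and α·A_n^{(m+i−j)}(z,α) when i < j (indices taken so the first column is (A_n^{(0)}, A_n^{(1)}, …, A_n^{(m−1)})^T and each column is the cyclic shift of the previous one with the wrapped entries multiplied by α). -/
/-- The generalized Rédei polynomials `A_n^{(i)}(z, α)` for parameter `m`, defined by the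
recursion `A_{n+1}^{(0)} = z·A_n^{(0)} + α·A_n^{(m−1)}`, `A_{n+1}^{(i)} = z·A_n^{(i)} + A_n^{(i−1)}`
for `1 ≤ i ≤ m−1`, with `A_0^{(0)} = 1` and `A_0^{(i)} = 0` for `i ≠ 0`. -/
def genRedei {R : Type*} [CommRing R] (m : ℕ) (z α : R) : ℕ → ℕ → R
  | 0, i => if i = 0 then 1 else 0
  | n + 1, 0 => z * genRedei m z α n 0 + α * genRedei m z α n (m - 1)
  | n + 1, i + 1 => z * genRedei m z α n (i + 1) + genRedei m z α n i

/-- The `m×m` matrix with `z` on the diagonal, `1` on the subdiagonal, `α` in the top-right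
corner and `0` elsewhere. -/
def pellMatrix (m : ℕ) {R : Type*} [CommRing R] (z α : R) : Matrix (Fin m) (Fin m) R :=
  Matrix.of fun i j =>
    if (i : ℕ) = (j : ℕ) then z
    else if (i : ℕ) = (j : ℕ) + 1 then 1
    else if (i : ℕ) = 0 ∧ (j : ℕ) = m - 1 then α
    else 0

/-- The circulant-type matrix whose `(i,j)` entry is `A_n^{(i−j)}` when `i ≥ j` and
`α·A_n^{(m+i−j)}` when `i < j`; its first column is `(A_n^{(0)}, …, A_n^{(m−1)})ᵀ`. -/
def genRedeiMatrix (m : ℕ) {R : Type*} [CommRing R] (z α : R) (n : ℕ) :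
    Matrix (Fin m) (Fin m) R :=
  Matrix.of fun i j =>
    if (j : ℕ) ≤ (i : ℕ) then genRedei m z α n ((i : ℕ) - (j : ℕ))
    else α * genRedei m z α n (m + (i : ℕ) - (j : ℕ))

/-- For every `n`, the `n`-th power of the matrix `M` equals the circulant-type matrix built
from the generalized Rédei polynomials `A_n^{(0)}, …, A_n^{(m−1)}`. -/
theorem pellMatrix_pow (m : ℕ) (hm : 2 ≤ m) {R : Type*} [CommRing R] (z α : R) (n : ℕ) :
    (pellMatrix m z α) ^ n = genRedeiMatrix m z α n := by
  induction n with
  | zero =>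
    ext i j
    have hj := j.isLt
    simp only [pow_zero, Matrix.one_apply, genRedeiMatrix, Matrix.of_apply, genRedei,
      Fin.ext_iff]
    split_ifs <;> first | rfl | omega | (exfalso; omega) | ring
  | succ n ih =>
    rw [pow_succ', ih]
    ext i j
    rw [Matrix.mul_apply]
    set G := genRedeiMatrix m z α n with hG
    have hi := i.isLt
    have hj := j.isLt
    have hsum : ∀ k : Fin m, pellMatrix m z α i k * G k j =
        (if (i : ℕ) = (k : ℕ) then z * G k j else 0)
        + (if (i : ℕ) = (k : ℕ) + 1 then G k j else 0)
        + (if (i : ℕ) = 0 ∧ (k : ℕ) = m - 1 then α * G k j else 0) := by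
      intro k
      have hk := k.isLt
      simp only [pellMatrix, Matrix.of_apply]
      split_ifs <;> first | (exfalso; omega) | ring
    rw [Finset.sum_congr rfl (fun k _ => hsum k), Finset.sum_add_distrib,
      Finset.sum_add_distrib]
    have S1 : (∑ k : Fin m, if (i : ℕ) = (k : ℕ) then z * G k j else 0) = z * G i j := by
      rw [Finset.sum_eq_single i]
      · simp
      · intro k _ hk
        rw [if_neg]
        intro h
        exact hk (Fin.ext h.symm)
      · simp
    rw [S1]
    rcases Nat.eq_zero_or_pos (i : ℕ) with hi0 | hi1
    · -- i = 0
      have S2 : (∑ k : Fin m, if (i : ℕ) = (k : ℕ) + 1 then G k j else 0) = 0 := by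
        apply Finset.sum_eq_zero
        intro k _
        rw [if_neg]
        omega
      have S3 : (∑ k : Fin m, if (i : ℕ) = 0 ∧ (k : ℕ) = m - 1 then α * G k j else 0)
          = α * G ⟨m - 1, by omega⟩ j := by
        rw [Finset.sum_eq_single (⟨m - 1, by omega⟩ : Fin m)]
        · rw [if_pos ⟨hi0, rfl⟩]
        · intro k _ hk
          rw [if_neg]
          rintro ⟨-, h2⟩
          exact hk (Fin.ext h2)
        · simp
      rw [S2, S3]
      simp only [hG, genRedeiMatrix, Matrix.of_apply, Fin.val_mk, hi0]
      rcases Nat.eq_zero_or_pos (j : ℕ) with hj0 | hj1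
      · -- j = 0
        simp only [if_pos (by omega : (j : ℕ) ≤ 0), if_pos (by omega : (j : ℕ) ≤ m - 1)]
        rw [hj0]
        simp only [Nat.sub_zero, Nat.add_zero, genRedei]
        ring
      · -- j ≥ 1
        simp only [if_neg (by omega : ¬ (j : ℕ) ≤ 0), if_pos (by omega : (j : ℕ) ≤ m - 1)]
        have h1 : m + 0 - (j : ℕ) = (m - 1 - (j : ℕ)) + 1 := by omega
        have h2 : m - 1 - (j : ℕ) + 1 = m - (j : ℕ) := by omega
        rw [h1]
        simp only [genRedei]
        rw [h2, show m - (j : ℕ) = m + 0 - (j : ℕ) from by omega]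
        ring
    · -- i ≥ 1
      have S3 : (∑ k : Fin m, if (i : ℕ) = 0 ∧ (k : ℕ) = m - 1 then α * G k j else 0) = 0 := by
        apply Finset.sum_eq_zero
        intro k _
        rw [if_neg]
        rintro ⟨h1, -⟩
        omega
      have S2 : (∑ k : Fin m, if (i : ℕ) = (k : ℕ) + 1 then G k j else 0)
          = G ⟨(i : ℕ) - 1, by omega⟩ j := by
        rw [Finset.sum_eq_single (⟨(i : ℕ) - 1, by omega⟩ : Fin m)]
        · rw [if_pos (show (i : ℕ) = ((i : ℕ) - 1) + 1 from by omega)]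
        · intro k _ hk
          rw [if_neg]
          intro h
          exact hk (Fin.ext (show (k : ℕ) = (i : ℕ) - 1 from by omega))
        · simp
      rw [S2, S3, add_zero]
      simp only [hG, genRedeiMatrix, Matrix.of_apply, Fin.val_mk]
      rcases lt_trichotomy (j : ℕ) (i : ℕ) with hlt | heq | hgt
      · -- j < i
        simp only [if_pos (by omega : (j : ℕ) ≤ (i : ℕ)), if_pos (by omega : (j : ℕ) ≤ (i : ℕ) - 1)]
        have h1 : (i : ℕ) - (j : ℕ) = ((i : ℕ) - 1 - (j : ℕ)) + 1 := by omega
        rw [h1]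
        simp only [genRedei]
      · -- j = i
        simp only [if_pos (by omega : (j : ℕ) ≤ (i : ℕ)), if_neg (by omega : ¬ (j : ℕ) ≤ (i : ℕ) - 1)]
        rw [show (i : ℕ) - (j : ℕ) = 0 from by omega]
        simp only [genRedei]
        rw [show m + ((i : ℕ) - 1) - (j : ℕ) = m - 1 from by omega]
      · -- j > i
        simp only [if_neg (by omega : ¬ (j : ℕ) ≤ (i : ℕ)), if_neg (by omega : ¬ (j : ℕ) ≤ (i : ℕ) - 1)]
        have h1 : m + (i : ℕ) - (j : ℕ) = (m + ((i : ℕ) - 1) - (j : ℕ)) + 1 := by omega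
        rw [h1]
        simp only [genRedei]
        rw [show m + ((i : ℕ) - 1) - (j : ℕ) + 1 = m + (i : ℕ) - (j : ℕ) from by omega, h1]
        ring
end

section
/- Fix m ≥ 2, a commutative ring R and z, α ∈ R. Let C_n be the m×m matrix whose (i,j) entry is A_n^{(i−j)}(z,α) when i ≥ j and α·A_n^{(m+i−j)}(z,α) when i < j, where A_n^{(0)}, …, A_n^{(m−1)} are the generalized Rédei polynomials. Then det C_n = (z^m + (−1)^{m−1}·α)^n. In particular, taking R = ℤ[X], z = f ∈ ℤ[X], r ∈ ℤ and α = (−f)^m + r, one has det C_n = ((−1)^{m−1}·r)^n. -/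
-- helper: sum over two points
lemma sum_eq_two_points {ι : Type*} {M : Type*} [AddCommMonoid M] [DecidableEq ι]
    {s : Finset ι} {f : ι → M} {a b : ι} (ha : a ∈ s) (hb : b ∈ s) (hab : a ≠ b)
    (h : ∀ c ∈ s, c ≠ a → c ≠ b → f c = 0) : ∑ c ∈ s, f c = f a + f b := by
  rw [← Finset.sum_pair hab]
  refine (Finset.sum_subset ?_ ?_).symm
  · intro c hc
    simp only [Finset.mem_insert, Finset.mem_singleton] at hc
    rcases hc with rfl | rfl <;> assumption
  · intro c hc hc'
    simp only [Finset.mem_insert, Finset.mem_singleton, not_or] at hc'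
    exact h c hc hc'.1 hc'.2

lemma pell_mul (m : ℕ) (hm : 2 ≤ m) {R : Type*} [CommRing R] (z α : R) (n : ℕ) :
    pellMatrix m z α * genRedeiMatrix m z α n = genRedeiMatrix m z α (n + 1) := by
  ext i j
  rw [Matrix.mul_apply]
  rcases Nat.eq_zero_or_pos (i : ℕ) with hi | hi
  · -- i = 0 : nonzero at k = 0 and k = m-1
    have h0 : (0 : ℕ) < m := by omega
    obtain rfl : i = ⟨0, h0⟩ := Fin.ext hi
    have rw2 : ∑ k, pellMatrix m z α ⟨0, h0⟩ k * genRedeiMatrix m z α n k j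
        = pellMatrix m z α ⟨0, h0⟩ ⟨0, h0⟩ * genRedeiMatrix m z α n ⟨0, h0⟩ j
        + pellMatrix m z α ⟨0, h0⟩ ⟨m - 1, by omega⟩
            * genRedeiMatrix m z α n ⟨m - 1, by omega⟩ j := by
      apply sum_eq_two_points (Finset.mem_univ _) (Finset.mem_univ _)
      · intro h; apply_fun (Fin.val) at h; simp at h; omega
      · intro c _ hc1 hc2
        have h1 : (c : ℕ) ≠ 0 := fun h => hc1 (Fin.ext h)
        have h2 : (c : ℕ) ≠ m - 1 := fun h => hc2 (Fin.ext h)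
        show (if (0:ℕ) = (c:ℕ) then z else if (0:ℕ) = (c:ℕ) + 1 then 1
          else if (0:ℕ) = 0 ∧ (c:ℕ) = m - 1 then α else 0) * _ = 0
        rw [if_neg (by omega), if_neg (by omega), if_neg (by simp [h2]), zero_mul]
    rw [rw2]
    show (if (0:ℕ) = 0 then z else if (0:ℕ) = 0 + 1 then 1
          else if (0:ℕ) = 0 ∧ (0:ℕ) = m - 1 then α else 0)
        * (if (j:ℕ) ≤ 0 then genRedei m z α n (0 - j) else α * genRedei m z α n (m + 0 - j))
      + (if (0:ℕ) = m - 1 then z else if (0:ℕ) = (m-1) + 1 then 1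
          else if (0:ℕ) = 0 ∧ (m-1:ℕ) = m - 1 then α else 0)
        * (if (j:ℕ) ≤ m - 1 then genRedei m z α n (m - 1 - j)
            else α * genRedei m z α n (m + (m-1) - j))
      = if (j:ℕ) ≤ 0 then genRedei m z α (n+1) (0 - j)
          else α * genRedei m z α (n+1) (m + 0 - j)
    split_ifs <;> first
      | omega
      | contradiction
      | (rename_i hj _ _
         rw [show (0:ℕ) - (j:ℕ) = 0 by omega, show m - 1 - (j:ℕ) = m - 1 by omega]
         simp only [genRedei]; try ring)
      | (rename_i hj _ _
         obtain ⟨t, ht⟩ : ∃ t, m + 0 - (j:ℕ) = t + 1 := ⟨m - j - 1, by omega⟩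
         rw [ht, show m - 1 - (j:ℕ) = t by omega]
         simp only [genRedei]; try ring)
  · -- i ≥ 1 : nonzero at k = i and k = i-1
    obtain ⟨i', hi'⟩ : ∃ i', (i : ℕ) = i' + 1 := ⟨(i:ℕ) - 1, by omega⟩
    have hio : i' + 1 < m := by omega
    obtain rfl : i = ⟨i' + 1, hio⟩ := Fin.ext hi'
    have rw2 : ∑ k, pellMatrix m z α ⟨i' + 1, hio⟩ k * genRedeiMatrix m z α n k j
        = pellMatrix m z α ⟨i' + 1, hio⟩ ⟨i' + 1, hio⟩
            * genRedeiMatrix m z α n ⟨i' + 1, hio⟩ j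
        + pellMatrix m z α ⟨i' + 1, hio⟩ ⟨i', by omega⟩
            * genRedeiMatrix m z α n ⟨i', by omega⟩ j := by
      apply sum_eq_two_points (Finset.mem_univ _) (Finset.mem_univ _)
      · intro h; apply_fun (Fin.val) at h; simp at h
      · intro c _ hc1 hc2
        have h1 : (c : ℕ) ≠ i' + 1 := fun h => hc1 (Fin.ext h)
        have h2 : (c : ℕ) ≠ i' := fun h => hc2 (Fin.ext h)
        show (if (i'+1:ℕ) = (c:ℕ) then z else if (i'+1:ℕ) = (c:ℕ) + 1 then 1
          else if (i'+1:ℕ) = 0 ∧ (c:ℕ) = m - 1 then α else 0) * _ = 0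
        rw [if_neg (by omega), if_neg (by omega), if_neg (by omega), zero_mul]
    rw [rw2]
    show (if (i'+1:ℕ) = i'+1 then z else if (i'+1:ℕ) = (i'+1) + 1 then 1
          else if (i'+1:ℕ) = 0 ∧ (i'+1:ℕ) = m - 1 then α else 0)
        * (if (j:ℕ) ≤ i'+1 then genRedei m z α n ((i'+1) - j)
            else α * genRedei m z α n (m + (i'+1) - j))
      + (if (i'+1:ℕ) = i' then z else if (i'+1:ℕ) = i' + 1 then 1
          else if (i'+1:ℕ) = 0 ∧ (i':ℕ) = m - 1 then α else 0)
        * (if (j:ℕ) ≤ i' then genRedei m z α n (i' - j)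
            else α * genRedei m z α n (m + i' - j))
      = if (j:ℕ) ≤ i'+1 then genRedei m z α (n+1) ((i'+1) - j)
          else α * genRedei m z α (n+1) (m + (i'+1) - j)
    split_ifs <;> first
      | omega
      | contradiction
      | (rename_i hj1 _ hj2
         rw [show (i'+1:ℕ) - (j:ℕ) = (i' - j) + 1 by omega]
         simp only [genRedei]; try ring)
      | (rename_i hj1 _ hj2
         rw [show (i'+1:ℕ) - (j:ℕ) = 0 by omega, show m + i' - (j:ℕ) = m - 1 by omega]
         simp only [genRedei]; try ring)
      | (rename_i hj1 _ hj2
         rw [show m + (i'+1:ℕ) - (j:ℕ) = (m + i' - j) + 1 by omega]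
         simp only [genRedei]; try ring)

lemma genRedeiMatrix_zero (m : ℕ) {R : Type*} [CommRing R] (z α : R) :
    genRedeiMatrix m z α 0 = 1 := by
  ext i j
  have hiv := i.isLt
  have hjv := j.isLt
  have hf : (i = j) ↔ (i : ℕ) = (j : ℕ) := Fin.ext_iff
  simp only [genRedeiMatrix, Matrix.of_apply, genRedei, Matrix.one_apply, hf]
  split_ifs <;> first | rfl | omega | simp

lemma pell_det (m : ℕ) (hm : 2 ≤ m) {R : Type*} [CommRing R] (z α : R) :
    (pellMatrix m z α).det = z ^ m + (-1) ^ (m - 1) * α := by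
  obtain ⟨k, rfl⟩ : ∃ k, m = k + 2 := ⟨m - 2, by omega⟩
  rw [show (pellMatrix (k+2) z α).det
      = (pellMatrix (k+2) z α).det from rfl]
  rw [Matrix.det_succ_row_zero]
  have key : ∑ j : Fin (k+2), (-1) ^ (j:ℕ) * pellMatrix (k+2) z α 0 j
        * ((pellMatrix (k+2) z α).submatrix Fin.succ j.succAbove).det
      = (-1) ^ ((0 : Fin (k+2)):ℕ) * pellMatrix (k+2) z α 0 0
        * ((pellMatrix (k+2) z α).submatrix Fin.succ (0 : Fin (k+2)).succAbove).det
      + (-1) ^ ((Fin.last (k+1)):ℕ) * pellMatrix (k+2) z α 0 (Fin.last (k+1))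
        * ((pellMatrix (k+2) z α).submatrix Fin.succ (Fin.last (k+1)).succAbove).det := by
    apply sum_eq_two_points (Finset.mem_univ _) (Finset.mem_univ _)
    · intro h; apply_fun (Fin.val) at h; simp [Fin.last] at h
    · intro c _ hc1 hc2
      have h1 : (c : ℕ) ≠ 0 := fun h => hc1 (Fin.ext h)
      have h2 : (c : ℕ) ≠ k + 1 := fun h => hc2 (Fin.ext h)
      have hcv := c.isLt
      have : pellMatrix (k+2) z α 0 c = 0 := by
        show (if (0:ℕ) = (c:ℕ) then z else if (0:ℕ) = (c:ℕ) + 1 then 1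
          else if (0:ℕ) = 0 ∧ (c:ℕ) = (k+2) - 1 then α else 0) = 0
        rw [if_neg (by omega), if_neg (by omega), if_neg (by omega)]
      rw [this, mul_zero, zero_mul]
  rw [key]
  have e00 : pellMatrix (k+2) z α 0 0 = z := by
    show (if (0:ℕ) = (0:ℕ) then z else if (0:ℕ) = (0:ℕ) + 1 then 1
      else if (0:ℕ) = 0 ∧ (0:ℕ) = (k+2) - 1 then α else 0) = z
    rw [if_pos rfl]
  have e0l : pellMatrix (k+2) z α 0 (Fin.last (k+1)) = α := by
    show (if (0:ℕ) = (k+1:ℕ) then z else if (0:ℕ) = (k+1) + 1 then 1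
      else if (0:ℕ) = 0 ∧ (k+1:ℕ) = (k+2) - 1 then α else 0) = α
    rw [if_neg (by omega), if_neg (by omega), if_pos (by omega)]
  have d0 : ((pellMatrix (k+2) z α).submatrix Fin.succ (0 : Fin (k+2)).succAbove).det
      = z ^ (k+1) := by
    rw [Matrix.det_of_lowerTriangular]
    · have diag : ∀ i : Fin (k+1),
          ((pellMatrix (k+2) z α).submatrix Fin.succ (0 : Fin (k+2)).succAbove) i i = z := by
        intro i
        show (if ((i.succ : Fin (k+2)):ℕ) = (((0:Fin (k+2)).succAbove i):ℕ) then z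
          else if ((i.succ : Fin (k+2)):ℕ) = (((0:Fin (k+2)).succAbove i):ℕ) + 1 then 1
          else if ((i.succ : Fin (k+2)):ℕ) = 0 ∧ (((0:Fin (k+2)).succAbove i):ℕ) = (k+2) - 1
            then α else 0) = z
        rw [Fin.succAbove_zero, if_pos rfl]
      rw [Finset.prod_congr rfl (fun i _ => diag i), Finset.prod_const, Finset.card_univ,
        Fintype.card_fin]
    · intro i j hij
      have : (i : ℕ) < (j : ℕ) := hij
      show (if ((i.succ : Fin (k+2)):ℕ) = (((0:Fin (k+2)).succAbove j):ℕ) then z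
        else if ((i.succ : Fin (k+2)):ℕ) = (((0:Fin (k+2)).succAbove j):ℕ) + 1 then 1
        else if ((i.succ : Fin (k+2)):ℕ) = 0 ∧ (((0:Fin (k+2)).succAbove j):ℕ) = (k+2) - 1
          then α else 0) = 0
      rw [Fin.succAbove_zero]
      simp only [Fin.val_succ]
      rw [if_neg (by omega), if_neg (by omega), if_neg (by omega)]
  have d1 : ((pellMatrix (k+2) z α).submatrix Fin.succ (Fin.last (k+1)).succAbove).det
      = 1 := by
    rw [Matrix.det_of_upperTriangular]
    · have diag : ∀ i : Fin (k+1),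
          ((pellMatrix (k+2) z α).submatrix Fin.succ (Fin.last (k+1)).succAbove) i i = 1 := by
        intro i
        show (if ((i.succ : Fin (k+2)):ℕ) = (((Fin.last (k+1)).succAbove i):ℕ) then z
          else if ((i.succ : Fin (k+2)):ℕ) = (((Fin.last (k+1)).succAbove i):ℕ) + 1 then 1
          else if ((i.succ : Fin (k+2)):ℕ) = 0 ∧ (((Fin.last (k+1)).succAbove i):ℕ) = (k+2) - 1
            then α else 0) = 1
        rw [Fin.succAbove_last]
        simp only [Fin.val_succ, Fin.coe_castSucc]
        rw [if_neg (by omega)]; simp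
      rw [Finset.prod_congr rfl (fun i _ => diag i), Finset.prod_const, one_pow]
    · intro i j hij
      have : (j : ℕ) < (i : ℕ) := hij
      show (if ((i.succ : Fin (k+2)):ℕ) = (((Fin.last (k+1)).succAbove j):ℕ) then z
        else if ((i.succ : Fin (k+2)):ℕ) = (((Fin.last (k+1)).succAbove j):ℕ) + 1 then 1
        else if ((i.succ : Fin (k+2)):ℕ) = 0 ∧ (((Fin.last (k+1)).succAbove j):ℕ) = (k+2) - 1
          then α else 0) = 0
      rw [Fin.succAbove_last]
      simp only [Fin.val_succ, Fin.coe_castSucc]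
      rw [if_neg (by omega), if_neg (by omega), if_neg (by omega)]
  rw [e00, e0l, d0, d1]
  simp only [Fin.val_zero, Fin.val_last, pow_zero, one_mul, mul_one]
  rw [show (k + 2) - 1 = k + 1 from rfl]
  ring

lemma genRedeiMatrix_det_aux (m : ℕ) (hm : 2 ≤ m) {R : Type*} [CommRing R] (z α : R) (n : ℕ) :
    (genRedeiMatrix m z α n).det = (z ^ m + (-1) ^ (m - 1) * α) ^ n := by
  induction n with
  | zero => rw [genRedeiMatrix_zero, Matrix.det_one, pow_zero]
  | succ n ih =>
    rw [← pell_mul m hm, Matrix.det_mul, pell_det m hm, ih, pow_succ]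
    ring

open Polynomial in
/-- `det C_n = (z^m + (−1)^{m−1}·α)ⁿ`; in particular, for `R = ℤ[X]`, `z = f` and
`α = (−f)^m + r` one has `det C_n = ((−1)^{m−1}·r)ⁿ`. -/
theorem genRedeiMatrix_det (m : ℕ) (hm : 2 ≤ m) {R : Type*} [CommRing R] (z α : R) (n : ℕ) :
    (genRedeiMatrix m z α n).det = (z ^ m + (-1) ^ (m - 1) * α) ^ n ∧
    ∀ (f : Polynomial ℤ) (r : ℤ),
      (genRedeiMatrix m f ((-f) ^ m + C r) n).det = Polynomial.C (((-1) ^ (m - 1) * r) ^ n) := by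
  refine ⟨genRedeiMatrix_det_aux m hm z α n, fun f r => ?_⟩
  rw [genRedeiMatrix_det_aux m hm f ((-f) ^ m + C r) n]
  obtain ⟨k, rfl⟩ : ∃ k, m = k + 2 := ⟨m - 2, by omega⟩
  have key2 : ((-1 : Polynomial ℤ) ^ (k+1)) * (-1) ^ (k+2) = -1 := by
    rw [← pow_add, show k+1+(k+2) = 2*(k+1)+1 by ring, pow_succ, pow_mul]
    norm_num
  have h1 : (f ^ (k+2) + (-1) ^ (k+2-1) * ((-f) ^ (k+2) + C r))
      = C ((-1) ^ (k+1) * r) := by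
    rw [show k+2-1 = k+1 from rfl, neg_pow f]
    calc f^(k+2) + (-1:Polynomial ℤ)^(k+1) * ((-1)^(k+2) * f^(k+2) + C r)
        = f^(k+2) + ((-1)^(k+1) * (-1)^(k+2)) * f^(k+2) + (-1)^(k+1) * C r := by ring
      _ = (-1)^(k+1) * C r := by rw [key2]; ring
      _ = C ((-1) ^ (k+1) * r) := by simp [map_mul]
  rw [h1, ← map_pow]
  norm_num
end

section
/- Fix a commutative ring R and z, α ∈ R, and let A_n^{(0)}, A_n^{(1)}, A_n^{(2)} be the generalized Rédei polynomials for m = 3. Then for every natural number n, (A_n^{(0)})^3 + α·(A_n^{(1)})^3 + α^2·(A_n^{(2)})^3 − 3α·A_n^{(0)}·A_n^{(1)}·A_n^{(2)} = (z^3 + α)^n. -/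
/-- The cubic Pell identity for the generalized Rédei polynomials with `m = 3`:
`(A_n^{(0)})³ + α·(A_n^{(1)})³ + α²·(A_n^{(2)})³ − 3α·A_n^{(0)}·A_n^{(1)}·A_n^{(2)} = (z³ + α)ⁿ`. -/
theorem genRedei_cubic_pell {R : Type*} [CommRing R] (z α : R) (n : ℕ) :
    (genRedei 3 z α n 0) ^ 3 + α * (genRedei 3 z α n 1) ^ 3 + α ^ 2 * (genRedei 3 z α n 2) ^ 3
      - 3 * α * (genRedei 3 z α n 0) * (genRedei 3 z α n 1) * (genRedei 3 z α n 2)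
      = (z ^ 3 + α) ^ n := by
  induction n with
  | zero => simp [genRedei]
  | succ n ih =>
    have h0 : genRedei 3 z α (n+1) 0 = z * genRedei 3 z α n 0 + α * genRedei 3 z α n 2 := rfl
    have h1 : genRedei 3 z α (n+1) 1 = z * genRedei 3 z α n 1 + genRedei 3 z α n 0 := rfl
    have h2 : genRedei 3 z α (n+1) 2 = z * genRedei 3 z α n 2 + genRedei 3 z α n 1 := rfl
    rw [h0, h1, h2, pow_succ (z ^ 3 + α), ← ih]
    ring
end

section
/- Let m be a prime number, let r = m or r = −m, let f ∈ ℤ[X], and in ℤ[X] consider the generalized Rédei polynomials A_n^{(i)} (0 ≤ i ≤ m−1) with parameters z = f and α = (−f)^m + r. Then for every natural number n divisible by m and every 0 ≤ i ≤ m−1, the integer m^{n/m} divides A_n^{(i)} in ℤ[X] (i.e., it divides every coefficient). -/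
open Polynomial

section
variable {R : Type*} [CommRing R]

noncomputable def genRedeiPoly (m : ℕ) (z α : R) (n : ℕ) : R[X] :=
  ∑ i : Fin m, C (genRedei m z α n i) * X ^ (i : ℕ)

lemma C_add_X_mul_genRedeiPoly_sub_genRedeiPoly_succ (M : ℕ) (z α : R) (n : ℕ) :
    (C z + X) * genRedeiPoly (M + 1) z α n - genRedeiPoly (M + 1) z α (n + 1) =
      C (genRedei (M + 1) z α n M) * (X ^ (M + 1) - C α) := by
  set a := genRedei (M + 1) z α n
  have hX : X * genRedeiPoly (M + 1) z α n =
      ∑ i : Fin M, C (a i) * X ^ ((i : ℕ) + 1) + C (a M) * X ^ (M + 1) := by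
    rw [genRedeiPoly, Finset.mul_sum, Fin.sum_univ_castSucc]
    simp only [Fin.val_castSucc, Fin.val_last]
    congr 1
    · exact Finset.sum_congr rfl fun i _ => by ring
    · ring
  have hz : C z * genRedeiPoly (M + 1) z α n =
      C (z * a 0) + ∑ i : Fin M, C (z * a (i + 1)) * X ^ ((i : ℕ) + 1) := by
    rw [genRedeiPoly, Finset.mul_sum, Fin.sum_univ_succ]
    simp only [Fin.val_zero, Fin.val_succ, pow_zero, mul_one, map_mul, mul_assoc, a]
  have hsucc : genRedeiPoly (M + 1) z α (n + 1) =
      C (z * a 0 + α * a M) + ∑ i : Fin M, C (z * a (i + 1) + a i) * X ^ ((i : ℕ) + 1) := by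
    rw [genRedeiPoly, Fin.sum_univ_succ]
    simp only [Fin.val_zero, Fin.val_succ, pow_zero, mul_one, genRedei, a, add_tsub_cancel_right]
  simp only [map_add, add_mul, Finset.sum_add_distrib] at hsucc hz
  rw [add_mul, hz, hX, hsucc]
  simp only [map_mul]
  ring

lemma X_pow_sub_C_dvd_add_pow_sub_genRedeiPoly {m : ℕ} (hm : m ≠ 0) (z α : R) (n : ℕ) :
    X ^ m - C α ∣ (C z + X) ^ n - genRedeiPoly m z α n := by
  obtain ⟨M, rfl⟩ := Nat.exists_eq_succ_of_ne_zero hm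
  induction n with
  | zero => simp [genRedeiPoly, genRedei]
  | succ n ih =>
    have h := C_add_X_mul_genRedeiPoly_sub_genRedeiPoly_succ M z α n
    rw [show (C z + X) ^ (n + 1) - genRedeiPoly (M + 1) z α (n + 1) =
      (C z + X) * ((C z + X) ^ n - genRedeiPoly (M + 1) z α n) +
        C (genRedei (M + 1) z α n M) * (X ^ (M + 1) - C α) by rw [← h]; ring]
    exact dvd_add (ih.mul_left _) (dvd_mul_left _ _)

lemma coeff_genRedeiPoly {m i : ℕ} (hi : i < m) (z α : R) (n : ℕ) :
    (genRedeiPoly m z α n).coeff i = genRedei m z α n i := by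
  simp only [genRedeiPoly, finsetSum_coeff, coeff_C_mul_X_pow]
  rw [Fintype.sum_eq_single ⟨i, hi⟩ fun j hj => if_neg fun h => hj (Fin.ext h.symm)]
  exact if_pos rfl

lemma C_dvd_of_monic_dvd_sub_smul {g P : R[X]} (hg : g.Monic) (hP : P.degree < g.degree)
    (c : R) (Q : R[X]) (h : g ∣ P - c • Q) : C c ∣ P := by
  nontriviality R
  have hPmod : P = c • (Q %ₘ g) := by
    rw [← (modByMonic_eq_self_iff hg).2 hP, ← smul_modByMonic, ← sub_eq_zero, ← sub_modByMonic,
      modByMonic_eq_zero_iff_dvd hg]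
    exact h
  rw [hPmod, smul_eq_C_mul]
  exact dvd_mul_right _ _

lemma exists_X_pow_sub_C_dvd_add_pow_sub_prime_mul {p : ℕ} (hp : p.Prime) {z α : R}
    (h : (p : R) ∣ α + z ^ p) : ∃ D : R[X], X ^ p - C α ∣ (C z + X) ^ p - C (p : R) * D := by
  obtain ⟨c, hc⟩ := h
  obtain ⟨s, hs⟩ := exists_add_pow_prime_eq hp (C z) (X : R[X])
  refine ⟨C c + C z * X * s, ⟨1, ?_⟩⟩
  have hc' : C z ^ p = C (p : R) * C c - C α := by
    rw [← map_pow, ← map_mul, ← hc, map_add]; ring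
  rw [hs, hc', map_natCast]
  ring

theorem prime_pow_dvd_genRedei {p : ℕ} (hp : p.Prime) {z α : R} (h : (p : R) ∣ α + z ^ p)
    (k : ℕ) {i : ℕ} (hi : i < p) : (p : R) ^ k ∣ genRedei p z α (p * k) i := by
  nontriviality R
  obtain ⟨D, hD⟩ := exists_X_pow_sub_C_dvd_add_pow_sub_prime_mul hp h
  have hpow : X ^ p - C α ∣ (C z + X) ^ (p * k) - (p : R) ^ k • D ^ k := by
    rw [pow_mul, smul_eq_C_mul, map_pow, ← mul_pow]
    exact hD.trans (sub_dvd_pow_sub_pow _ _ k)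
  have hpoly : X ^ p - C α ∣ genRedeiPoly p z α (p * k) - (p : R) ^ k • D ^ k := by
    have := dvd_sub hpow (X_pow_sub_C_dvd_add_pow_sub_genRedeiPoly hp.ne_zero z α (p * k))
    rwa [sub_sub_sub_cancel_left] at this
  have hC := C_dvd_of_monic_dvd_sub_smul (monic_X_pow_sub_C α hp.ne_zero)
    (by rw [degree_X_pow_sub_C hp.pos]; exact degree_sum_fin_lt _) _ _ hpoly
  rw [← coeff_genRedeiPoly hi]
  exact (C_dvd_iff_dvd_coeff _ _).1 hC i

lemma prime_dvd_neg_pow_add_pow {p : ℕ} (hp : p.Prime) (f : R) : (p : R) ∣ (-f) ^ p + f ^ p := by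
  rcases hp.eq_two_or_odd' with rfl | hodd
  · exact ⟨f ^ 2, by push_cast; ring⟩
  · rw [hodd.neg_pow, neg_add_cancel]
    exact dvd_zero _

end

open Polynomial in
/-- For a prime `m`, `r = ±m` and any `f ∈ ℤ[X]`, the integer `m^{n/m}` divides every
generalized Rédei polynomial `A_n^{(i)}` (with parameters `z = f`, `α = (−f)^m + r`) in `ℤ[X]`,
for every `n` divisible by `m` and every `0 ≤ i ≤ m − 1`. -/
theorem genRedei_divisibility (m : ℕ) (hm : m.Prime) (r : ℤ) (hr : r = m ∨ r = -(m : ℤ))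
    (f : Polynomial ℤ) (n : ℕ) (hn : m ∣ n) (i : ℕ) (hi : i ≤ m - 1) :
    C ((m : ℤ) ^ (n / m)) ∣ genRedei m f ((-f) ^ m + C r) n i := by
  obtain ⟨k, rfl⟩ := hn
  have hα : (m : ℤ[X]) ∣ (-f) ^ m + C r + f ^ m := by
    rw [add_right_comm]
    refine dvd_add (prime_dvd_neg_pow_add_pow hm f) ?_
    rcases hr with rfl | rfl <;> simp
  rw [Nat.mul_div_cancel_left k hm.pos, map_pow, map_natCast]
  exact prime_pow_dvd_genRedei hm hα k (by have := hm.pos; omega)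
end
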